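/- Suppose W_λ is a unilateral weighted shift in ℓ²(ℕ) with strictly positive weights that is C-symmetric with respect to a conjugation C satisfying Ce₁ = Σ_k α_k e_k with all α_k > 0. Then Σ_k α_k² = 1, Σ_k α_k² λ_k² = ∞, and for every m ∈ ℕ, Σ_{k=1}^∞ λ_k²⋯λ_{k+m−1}² α_{k+m}² = λ₁²⋯λ_m². -/

import Mathlib

open InnerProductSpace in
/-- A conjugation on a complex inner product space: an antilinear involution
satisfying `⟪Cf, Cg⟫ = ⟪g, f⟫`. -/
structure Conjugation (H : Type*) [NormedAddCommGroup H] [InnerProductSpace ℂ H] where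
  toFun : H → H
  map_add' : ∀ x y, toFun (x + y) = toFun x + toFun y
  map_smul' : ∀ (c : ℂ) (x : H), toFun (c • x) = (starRingEnd ℂ c) • toFun x
  invol : ∀ x, toFun (toFun x) = x
  inner_map : ∀ x y, (inner ℂ (toFun x) (toFun y) : ℂ) = inner ℂ y x

/-- `T` is `C`-symmetric: `T ⊆ C T* C`. -/
noncomputable def CSymmetric {H : Type*} [NormedAddCommGroup H] [InnerProductSpace ℂ H]
    [CompleteSpace H] (C : Conjugation H) (T : H →ₗ.[ℂ] H) : Prop :=
  ∀ x : T.domain, ∃ hx : C.toFun x ∈ T.adjoint.domain,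
    C.toFun (T.adjoint ⟨C.toFun x, hx⟩) = T x

/-- `T` is `C`-selfadjoint: `T = C T* C`. -/
noncomputable def CSelfAdjoint {H : Type*} [NormedAddCommGroup H] [InnerProductSpace ℂ H]
    [CompleteSpace H] (C : Conjugation H) (T : H →ₗ.[ℂ] H) : Prop :=
  CSymmetric C T ∧ ∀ y : H, C.toFun y ∈ T.adjoint.domain → y ∈ T.domain

/-- Composition of partially defined linear maps, with its natural (maximal) domain. -/
noncomputable def LinearPMap.pcomp {R E F G : Type*} [Ring R] [AddCommGroup E] [Module R E]
    [AddCommGroup F] [Module R F] [AddCommGroup G] [Module R G]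
    (g : F →ₗ.[R] G) (f : E →ₗ.[R] F) : E →ₗ.[R] G :=
  g.comp (f.domRestrict ((g.domain.comap f.toFun).map f.domain.subtype))
    (by
      rintro ⟨x, hx1, hx2⟩
      obtain ⟨y, hy, hyx⟩ := hx1
      subst hyx
      have hy' : f y ∈ g.domain := hy
      convert hy' using 1
      apply LinearPMap.domRestrict_apply
      rfl)

/-- Natural powers of a partially defined linear map, `T^(n+1) = T ∘ T^n`, with
`T^0` the identity on the whole space. -/
noncomputable def LinearPMap.ppow {R E : Type*} [Ring R] [AddCommGroup E] [Module R E]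
    (T : E →ₗ.[R] E) : ℕ → E →ₗ.[R] E
  | 0 => ⟨⊤, (⊤ : Submodule R E).subtype⟩
  | n + 1 => T.pcomp (T.ppow n)

/-- `W` is the unilateral weighted shift in `ℓ²(ℕ)` with weights `lam` (0-indexed:
`W eₙ = lam n • e_{n+1}`): it has the maximal domain
`{f : Σ |lam n * f n|² < ∞}` and acts by `(W f)(n+1) = lam n * f n`, `(W f)(0) = 0`. -/
def IsWeightedShift (lam : ℕ → ℂ) (W : lp (fun _ : ℕ => ℂ) 2 →ₗ.[ℂ] lp (fun _ : ℕ => ℂ) 2) :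
    Prop :=
  (∀ f : lp (fun _ : ℕ => ℂ) 2, f ∈ W.domain ↔ Memℓp (fun n => lam n * f n) 2) ∧
  (∀ f : W.domain, (W f : lp (fun _ : ℕ => ℂ) 2) 0 = 0 ∧
    ∀ n : ℕ, (W f : lp (fun _ : ℕ => ℂ) 2) (n + 1) = lam n * (f : lp (fun _ : ℕ => ℂ) 2) n)

/-- The canonical orthonormal basis of `ℓ²(ℕ)` (0-indexed). -/
noncomputable def e (n : ℕ) : lp (fun _ : ℕ => ℂ) 2 := lp.single 2 n 1


/-! Because `C` is an isometric antilinear involution, `C`-symmetry of `W` says that `C W C`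
acts as the backward shift: `(C (W x))ₙ = λₙ (C x)ₙ₊₁`. Iterating this along
`W (λ₀ ⋯ λ_{m-1} e_m) = λ₀ ⋯ λ_m e_{m+1}` shows that `C (λ₀ ⋯ λ_{m-1} e_m)` has coordinates
`λₙ ⋯ λ_{n+m-1} α_{n+m}`, and the two identities are `‖C f‖² = ‖f‖²` for `f = e₀` and for
`f = λ₀ ⋯ λ_{m-1} e_m`. If `Σ α_k² λ_k²` were finite, `C e₀` would lie in the domain of `W`;
then `C (W (C e₀))` would be the backward shift of `e₀`, that is `0`, whereas
`(W (C e₀))₁ = λ₀ α₀ ≠ 0`. -/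

open scoped lp ComplexConjugate InnerProductSpace
open Finset

theorem Conjugation.norm_map {H : Type*} [NormedAddCommGroup H] [InnerProductSpace ℂ H]
    (C : Conjugation H) (x : H) : ‖C.toFun x‖ = ‖x‖ := by
  have h := C.inner_map x x
  rw [inner_self_eq_norm_sq_to_K, inner_self_eq_norm_sq_to_K] at h
  exact (pow_left_inj₀ (norm_nonneg _) (norm_nonneg _) two_ne_zero).mp (mod_cast h)

theorem lp.tsum_norm_sq_eq_norm_sq {ι : Type*} {E : ι → Type*} [∀ i, NormedAddCommGroup (E i)]
    (f : lp E 2) : ∑' i, ‖f i‖ ^ 2 = ‖f‖ ^ 2 := by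
  simpa using (lp.norm_rpow_eq_tsum (p := 2) (by norm_num) f).symm

theorem inner_e_right (f : ℓ²(ℕ, ℂ)) (n : ℕ) : ⟪f, e n⟫_ℂ = conj (f n) := by
  simp [e, lp.inner_single_right]

theorem norm_e (n : ℕ) : ‖e n‖ = 1 := by
  simp [e, lp.norm_single]

theorem e_apply (n k : ℕ) : e n k = if k = n then 1 else 0 := by
  simp [e, lp.single_apply, Pi.single_apply]

theorem dense_span_range_e : Dense (Submodule.span ℂ (Set.range e) : Set ℓ²(ℕ, ℂ)) := by
  have h : ⇑(default : HilbertBasis ℕ ℂ ℓ²(ℕ, ℂ)) = e :=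
    funext fun n => ((default : HilbertBasis ℕ ℂ ℓ²(ℕ, ℂ)).repr_symm_single n).symm
  exact Submodule.dense_iff_topologicalClosure_eq_top.mpr (h ▸ HilbertBasis.dense_span default)

namespace IsWeightedShift

variable {lam : ℕ → ℂ} {W : ℓ²(ℕ, ℂ) →ₗ.[ℂ] ℓ²(ℕ, ℂ)}

theorem e_mem_domain (hW : IsWeightedShift lam W) (n : ℕ) : e n ∈ W.domain := by
  rw [hW.1]
  have h : (fun k => lam k * e n k) = ⇑(lam n • e n) := by
    ext k
    by_cases hk : k = n <;> simp [e_apply, hk]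
  exact h ▸ (lam n • e n).2

theorem apply_e (hW : IsWeightedShift lam W) (n : ℕ) :
    (W ⟨e n, hW.e_mem_domain n⟩ : ℓ²(ℕ, ℂ)) = lam n • e (n + 1) := by
  ext (_ | k)
  · simp [(hW.2 _).1, e_apply]
  · rw [(hW.2 _).2 k]
    by_cases hk : k = n <;> simp [e_apply, hk]

theorem dense_domain (hW : IsWeightedShift lam W) : Dense (W.domain : Set ℓ²(ℕ, ℂ)) :=
  dense_span_range_e.mono <| Submodule.span_le.mpr <| Set.range_subset_iff.mpr hW.e_mem_domain

theorem conj_apply_succ (hW : IsWeightedShift lam W) {C : Conjugation ℓ²(ℕ, ℂ)}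
    (hsym : CSymmetric C W) (x : W.domain) (n : ℕ) :
    C.toFun (W x) n = conj (lam n) * C.toFun x (n + 1) := by
  obtain ⟨hx, hCx⟩ := hsym x
  have hadj : W.adjoint ⟨C.toFun x, hx⟩ = C.toFun (W x) := by rw [← hCx, C.invol]
  have h := W.adjoint_isFormalAdjoint hW.dense_domain ⟨C.toFun x, hx⟩ ⟨e n, hW.e_mem_domain n⟩
  rw [hadj, inner_e_right, hW.apply_e, inner_smul_right, inner_e_right] at h
  simpa using congrArg conj h

theorem conj_prod_smul_e_apply (hW : IsWeightedShift lam W) {C : Conjugation ℓ²(ℕ, ℂ)}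
    (hsym : CSymmetric C W) (m n : ℕ) :
    C.toFun ((∏ i ∈ range m, lam i) • e m) n =
      conj (∏ i ∈ range m, lam (n + i)) * C.toFun (e 0) (n + m) := by
  induction m generalizing n with
  | zero => simp
  | succ m ih =>
    have hWm : (W ((∏ i ∈ range m, lam i) • ⟨e m, hW.e_mem_domain m⟩) : ℓ²(ℕ, ℂ)) =
        (∏ i ∈ range (m + 1), lam i) • e (m + 1) := by
      rw [W.map_smul, hW.apply_e, smul_smul, prod_range_succ]
    rw [← hWm, hW.conj_apply_succ hsym, Submodule.coe_smul, ih, prod_range_succ', map_mul]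
    simp only [add_zero, ← add_assoc, add_right_comm n _ 1]
    ring

theorem conj_e_zero_notMem_domain (hW : IsWeightedShift lam W) {C : Conjugation ℓ²(ℕ, ℂ)}
    (hsym : CSymmetric C W) (hlam : lam 0 ≠ 0) (hC : C.toFun (e 0) 0 ≠ 0) :
    C.toFun (e 0) ∉ W.domain := by
  intro hmem
  set x : W.domain := ⟨C.toFun (e 0), hmem⟩
  have hCWx : C.toFun (W x) = 0 := by
    ext n
    rw [hW.conj_apply_succ hsym, show C.toFun x = e 0 from C.invol _, e_apply]
    simp
  have hWx : W x = 0 := by rw [← norm_eq_zero, ← C.norm_map, hCWx, norm_zero]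
  have h := (hW.2 x).2 0
  rw [hWx] at h
  exact mul_ne_zero hlam hC h.symm

end IsWeightedShift

/-- if `W_λ` is a unilateral weighted shift with strictly positive weights
which is `C`-symmetric, and `C e₁ = Σ_k α_k e_k` with all `α_k > 0` (here expressed
coordinatewise, everything 0-indexed), then `Σ α_k² = 1`, `Σ α_k² λ_k² = ∞`, and for every
`m ≥ 1`, `Σ_k λ_k² ⋯ λ_{k+m-1}² α_{k+m}² = λ₁² ⋯ λ_m²`. -/
theorem stmt_17 (lam : ℕ → ℝ) (hpos : ∀ n, 0 < lam n)
    (W : lp (fun _ : ℕ => ℂ) 2 →ₗ.[ℂ] lp (fun _ : ℕ => ℂ) 2)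
    (hW : IsWeightedShift (fun n => (lam n : ℂ)) W)
    (C : Conjugation (lp (fun _ : ℕ => ℂ) 2)) (hsym : CSymmetric C W)
    (α : ℕ → ℝ) (hα : ∀ k, 0 < α k)
    (hC1 : ∀ k : ℕ, (C.toFun (e 0)) k = (α k : ℂ)) :
    (∑' k : ℕ, (α k) ^ 2 = 1) ∧
    (¬ Summable fun k : ℕ => (α k) ^ 2 * (lam k) ^ 2) ∧
    (∀ m : ℕ, 1 ≤ m →
      ∑' k : ℕ, (∏ j ∈ Finset.range m, (lam (k + j)) ^ 2) * (α (k + m)) ^ 2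
        = ∏ j ∈ Finset.range m, (lam j) ^ 2) := by
  have hcoord (m k : ℕ) : C.toFun (((∏ i ∈ range m, lam i : ℝ) : ℂ) • e m) k =
      ((∏ i ∈ range m, lam (k + i)) * α (k + m) : ℝ) := by
    simpa [hC1] using hW.conj_prod_smul_e_apply hsym m k
  refine ⟨?_, fun hsum => ?_, fun m _ => ?_⟩
  · calc ∑' k, α k ^ 2 = ∑' k, ‖C.toFun (e 0) k‖ ^ 2 := by simp [hC1]
      _ = 1 := by rw [lp.tsum_norm_sq_eq_norm_sq, C.norm_map, norm_e, one_pow]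
  · refine hW.conj_e_zero_notMem_domain hsym (mod_cast (hpos 0).ne')
      (by simpa [hC1] using (hα 0).ne') ?_
    rw [hW.1, memℓp_gen_iff (by norm_num)]
    refine hsum.congr fun k => ?_
    simp [hC1, mul_pow, mul_comm]
  · calc ∑' k, (∏ j ∈ range m, lam (k + j) ^ 2) * α (k + m) ^ 2
        = ∑' k, ‖C.toFun (((∏ i ∈ range m, lam i : ℝ) : ℂ) • e m) k‖ ^ 2 := by
          simp only [hcoord, Complex.norm_real, Real.norm_eq_abs, sq_abs, mul_pow, prod_pow]
      _ = ∏ j ∈ range m, lam j ^ 2 := by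
          rw [lp.tsum_norm_sq_eq_norm_sq, C.norm_map, norm_smul, norm_e, mul_one,
            Complex.norm_real, Real.norm_eq_abs, sq_abs, prod_pow]
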